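/- The mechanism MinMaxP_γ is strategy proof for every γ ∈ [0,1/2]: no agent can, by misreporting their location, obtain a facility location strictly closer to their true location, for any fixed prediction π. -/
import Mathlib


/-- The MinMaxP_γ mechanism on a full profile of reports:
median of the leftmost report, truncated prediction, and rightmost report. -/
noncomputable def mechMinMaxPgamma (γ π : ℝ) {n : ℕ} (x : Fin (n + 1) → ℝ) : ℝ :=
  max (Finset.univ.inf' Finset.univ_nonempty x)
    (min (max γ (min π (1 - γ))) (Finset.univ.sup' Finset.univ_nonempty x))

/-- MinMaxP_γ is strategy proof: no agent can misreport and obtain a facility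
location strictly closer to their true location. -/
theorem stmt_7 (γ : ℝ) (hγ : γ ∈ Set.Icc (0 : ℝ) (1 / 2))
    (π : ℝ) (hπ : π ∈ Set.Icc (0 : ℝ) 1)
    (n : ℕ) (x : Fin (n + 1) → ℝ) (hx : ∀ i, x i ∈ Set.Icc (0 : ℝ) 1)
    (i : Fin (n + 1)) (x' : ℝ) (hx' : x' ∈ Set.Icc (0 : ℝ) 1) :
    |x i - mechMinMaxPgamma γ π x| ≤
      |x i - mechMinMaxPgamma γ π (Function.update x i x')| := by
  classical
  set π' := max γ (min π (1 - γ)) with hπ'def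
  set m := Finset.univ.inf' Finset.univ_nonempty x with hmdef
  set M := Finset.univ.sup' Finset.univ_nonempty x with hMdef
  set m' := Finset.univ.inf' Finset.univ_nonempty (Function.update x i x') with hm'def
  set M' := Finset.univ.sup' Finset.univ_nonempty (Function.update x i x') with hM'def
  have hmt : m ≤ x i := Finset.inf'_le _ (Finset.mem_univ i)
  have htM : x i ≤ M := Finset.le_sup' _ (Finset.mem_univ i)
  have hy : mechMinMaxPgamma γ π x = max m (min π' M) := rfl
  have hy' : mechMinMaxPgamma γ π (Function.update x i x') = max m' (min π' M') := rfl
  set t := x i with htdef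
  set y := max m (min π' M) with hydef
  set y' := max m' (min π' M') with hy'def
  rw [hy, hy']
  rcases lt_trichotomy y t with h | h | h
  · -- y < t : show y' ≤ y
    have hmy : m ≤ y := le_max_left _ _
    have hmlt : m < t := lt_of_le_of_lt hmy h
    -- m is attained by some j ≠ i
    obtain ⟨j, -, hj⟩ := Finset.exists_mem_eq_inf' (Finset.univ_nonempty) x
    have hji : j ≠ i := by
      intro hji; rw [hji] at hj; simp only [← htdef] at hj; exact (ne_of_lt hmlt) hj
    have hm'm : m' ≤ m := by
      have h0 : m' ≤ Function.update x i x' j := Finset.inf'_le _ (Finset.mem_univ j)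
      rwa [Function.update_of_ne hji, ← hj] at h0
    have hπ'M : π' < M := by
      by_contra hc
      push_neg at hc
      have : min π' M = M := min_eq_right hc
      have : M ≤ y := by rw [hydef, this]; exact le_max_right _ _
      linarith
    have hminπ : min π' M = π' := min_eq_left hπ'M.le
    have hyeq : y = max m π' := by rw [hydef, hminπ]
    have hy'le : y' ≤ y := by
      rw [hyeq, hy'def]
      exact max_le_max hm'm (min_le_left _ _)
    have h1 : |t - y| = t - y := abs_of_pos (by linarith)
    have h2 : |t - y'| = t - y' := abs_of_pos (by linarith)
    rw [h1, h2]; linarith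
  · rw [← h]; simp
  · -- y > t : show y' ≥ y
    have hMy : min π' M ≤ y := le_max_right _ _
    have hmle : m ≤ t := hmt
    have hyM : y = min π' M := by
      have hma : m ≤ min π' M := by
        by_contra hc
        push_neg at hc
        have : y = m := max_eq_left hc.le
        linarith
      rw [hydef]; exact max_eq_right hma
    have hMgt : t < M := lt_of_lt_of_le h (by rw [hyM]; exact min_le_right _ _)
    obtain ⟨j, -, hj⟩ := Finset.exists_mem_eq_sup' (Finset.univ_nonempty) x
    have hji : j ≠ i := by
      intro hji; rw [hji] at hj; simp only [← htdef] at hj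
      exact (ne_of_gt hMgt) hj
    have hM'M : M ≤ M' := by
      have h0 : Function.update x i x' j ≤ M' := Finset.le_sup' _ (Finset.mem_univ j)
      rwa [Function.update_of_ne hji, ← hj] at h0
    have hy'ge : y ≤ y' := by
      rw [hyM, hy'def]
      exact le_trans (min_le_min le_rfl hM'M) (le_max_right _ _)
    have h1 : |t - y| = y - t := by rw [abs_sub_comm]; exact abs_of_pos (by linarith)
    have h2 : |t - y'| = y' - t := by rw [abs_sub_comm]; exact abs_of_pos (by linarith)
    rw [h1, h2]; linarith
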